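/- Let Δ be a geodesic triangle in a convex geodesic metric space, let ν > 0, and suppose Δ is ν-thin relative to a subset Z. If the ν-fat part of some side of Δ has diameter at most L, then Δ is 2(L+ν)-thin. -/

import Mathlib

/-- A unit-speed geodesic from `a` to `b`, defined on `[0, dist a b]`. -/
def IsGeodesicSegment {M : Type*} [MetricSpace M] (γ : ℝ → M) (a b : M) : Prop :=
  γ 0 = a ∧ γ (dist a b) = b ∧
    ∀ s ∈ Set.Icc (0 : ℝ) (dist a b), ∀ t ∈ Set.Icc (0 : ℝ) (dist a b),
      dist (γ s) (γ t) = |s - t|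

/-- A geodesic metric space: every two points are joined by a geodesic. -/
def GeodesicSpace (M : Type*) [MetricSpace M] : Prop :=
  ∀ a b : M, ∃ γ : ℝ → M, IsGeodesicSegment γ a b

/-- A geodesic metric space is convex if for every pair of geodesics, parametrized
proportionally to arc length on `[0,1]`, the distance between corresponding points is a
convex function. -/
def ConvexMetric (M : Type*) [MetricSpace M] : Prop :=
  ∀ (a₁ b₁ a₂ b₂ : M) (γ₁ γ₂ : ℝ → M),
    IsGeodesicSegment γ₁ a₁ b₁ → IsGeodesicSegment γ₂ a₂ b₂ →
    ConvexOn ℝ (Set.Icc (0 : ℝ) 1)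
      (fun t : ℝ => dist (γ₁ (t * dist a₁ b₁)) (γ₂ (t * dist a₂ b₂)))

/-- The Gromov product `(b,c)_a`. -/
noncomputable def gromovProd {M : Type*} [MetricSpace M] (a b c : M) : ℝ :=
  (dist a b + dist a c - dist b c) / 2

/-- A geodesic triangle: vertices `v 0, v 1, v 2` together with a choice of geodesic side
`side i` from `v i` to `v (i+1)`. -/
structure GeodesicTriangle (M : Type*) [MetricSpace M] where
  v : Fin 3 → M
  side : Fin 3 → ℝ → M
  isGeod : ∀ i : Fin 3, IsGeodesicSegment (side i) (v i) (v (i + 1))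

namespace GeodesicTriangle

variable {M : Type*} [MetricSpace M]

/-- The Gromov product of the two other vertices at vertex `i`, i.e. the length of the leg
of the comparison tripod corresponding to vertex `i`. -/
noncomputable def gp (Δ : GeodesicTriangle M) (i : Fin 3) : ℝ :=
  gromovProd (Δ.v i) (Δ.v (i + 1)) (Δ.v (i + 2))

/-- The fiber of the tripod map over the point of the leg at vertex `i` at distance `t`
from its endpoint: the two points at distance `t` from `v i` on the two sides adjacent
to `v i` (valid for `0 ≤ t ≤ Δ.gp i`). -/
def legFiber (Δ : GeodesicTriangle M) (i : Fin 3) (t : ℝ) : Set M :=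
  {Δ.side i t, Δ.side (i + 2) (dist (Δ.v (i + 2)) (Δ.v i) - t)}

/-- The fiber of the tripod map over the central point of the tripod: the three internal
points of the triangle. -/
noncomputable def centralFiber (Δ : GeodesicTriangle M) : Set M :=
  {Δ.side 0 (Δ.gp 0), Δ.side 1 (Δ.gp 1), Δ.side 2 (Δ.gp 2)}

/-- `F` is a fiber of the canonical map `π` from the triangle to its comparison tripod. -/
def IsTripodFiber (Δ : GeodesicTriangle M) (F : Set M) : Prop :=
  (∃ i : Fin 3, ∃ t : ℝ, 0 ≤ t ∧ t ≤ Δ.gp i ∧ F = Δ.legFiber i t) ∨ F = Δ.centralFiber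

/-- A triangle is ν-thin if every fiber of the map to the comparison tripod has diameter
at most ν. -/
def IsThin (Δ : GeodesicTriangle M) (ν : ℝ) : Prop :=
  ∀ F : Set M, Δ.IsTripodFiber F → Metric.diam F ≤ ν

/-- The insize of a triangle: the diameter of the fiber over the central point of the
comparison tripod. -/
noncomputable def insize (Δ : GeodesicTriangle M) : ℝ :=
  Metric.diam Δ.centralFiber

/-- A triangle is ν-thin relative to `U` if it is not ν-thin, and every fiber of the
tripod map either has diameter at most ν or is contained in the closed ν-neighborhood
of `U`. -/
def IsThinRel (Δ : GeodesicTriangle M) (ν : ℝ) (U : Set M) : Prop :=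
  ¬ Δ.IsThin ν ∧
    ∀ F : Set M, Δ.IsTripodFiber F →
      Metric.diam F ≤ ν ∨ F ⊆ Metric.cthickening ν U

/-- The fiber of the tripod map through the point of side `i` at arclength `t` from
`v i`. -/
noncomputable def fiberOnSide (Δ : GeodesicTriangle M) (i : Fin 3) (t : ℝ) : Set M :=
  if t < Δ.gp i then Δ.legFiber i t
  else if Δ.gp i < t then Δ.legFiber (i + 1) (dist (Δ.v i) (Δ.v (i + 1)) - t)
  else Δ.centralFiber

/-- The ν-fat part of side `i` of the triangle: those points of the side whose fiber under
the tripod map has diameter at least ν. -/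
noncomputable def fatPartOfSide (Δ : GeodesicTriangle M) (ν : ℝ) (i : Fin 3) : Set M :=
  Δ.side i '' {t : ℝ | t ∈ Set.Icc 0 (dist (Δ.v i) (Δ.v (i + 1))) ∧
    ν ≤ Metric.diam (Δ.fiberOnSide i t)}

end GeodesicTriangle

/-- `(M, 𝒰)` has ν-relatively thin triangles if every geodesic triangle is either ν-thin
or ν-thin relative to some `U ∈ 𝒰`. -/
def HasRelThinTriangles (M : Type*) [MetricSpace M] (𝒰 : Set (Set M)) (ν : ℝ) : Prop :=
  ∀ Δ : GeodesicTriangle M, Δ.IsThin ν ∨ ∃ U ∈ 𝒰, Δ.IsThinRel ν U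

/-- `(M, 𝒰)` is a (ν,φ)-relatively hyperbolic pair. -/
def IsRelHypPair (M : Type*) [MetricSpace M] (𝒰 : Set (Set M)) (ν : ℝ) (φ : ℝ → ℝ) :
    Prop :=
  HasRelThinTriangles M 𝒰 ν ∧
    ∀ r : ℝ, 0 ≤ r → ∀ F₁ ∈ 𝒰, ∀ F₂ ∈ 𝒰, F₁ ≠ F₂ →
      Metric.diam (Metric.cthickening r F₁ ∩ Metric.cthickening r F₂) ≤ φ r

/-- A geodesic metric space is CAT(0) iff it satisfies the CN (Bruhat–Tits) inequality,
which is equivalent to the CAT(0) comparison inequality for geodesic triangles. -/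
def IsCAT0 (M : Type*) [MetricSpace M] : Prop :=
  GeodesicSpace M ∧
    ∀ x a b m : M, dist a m = dist a b / 2 → dist b m = dist a b / 2 →
      dist x m ^ 2 ≤ (dist x a ^ 2 + dist x b ^ 2) / 2 - dist a b ^ 2 / 4

/-- A subset is geodesically convex if it contains every geodesic between its points. -/
def IsGeodesicallyConvex {M : Type*} [MetricSpace M] (Z : Set M) : Prop :=
  ∀ a ∈ Z, ∀ b ∈ Z, ∀ γ : ℝ → M, IsGeodesicSegment γ a b →
    ∀ t ∈ Set.Icc (0 : ℝ) (dist a b), γ t ∈ Z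

/-- `Z` is η-super-attractive: for any `K ≥ 0` and points `a, b` in the closed
`K`-neighborhood of `Z`, all of the geodesic `[a,b]` except possibly the initial and
terminal segments of length `η + K` lies in `Z`. -/
def IsSuperAttractive {M : Type*} [MetricSpace M] (η : ℝ) (Z : Set M) : Prop :=
  ∀ K : ℝ, 0 ≤ K →
    ∀ a ∈ Metric.cthickening K Z, ∀ b ∈ Metric.cthickening K Z,
      ∀ γ : ℝ → M, IsGeodesicSegment γ a b →
        ∀ t : ℝ, η + K ≤ t → t ≤ dist a b - (η + K) → γ t ∈ Z

/-- The image of a geodesic from `a` to `b`. -/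
def geodesicImage {M : Type*} [MetricSpace M] (γ : ℝ → M) (a b : M) : Set M :=
  γ '' Set.Icc 0 (dist a b)

/-- A geodesic quadrilateral with vertices `x₁ x₂ x₃ x₄` and sides `γ₁ γ₂ γ₃ γ₄`
(where `γᵢ` joins `xᵢ` to `x_{i+1}`, cyclically) is μ-slim if each side is contained in
the closed μ-neighborhood of the union of the other three sides. -/
def IsSlimQuadrilateral {M : Type*} [MetricSpace M] (μ : ℝ) (x₁ x₂ x₃ x₄ : M)
    (γ₁ γ₂ γ₃ γ₄ : ℝ → M) : Prop :=
  geodesicImage γ₁ x₁ x₂ ⊆ Metric.cthickening μ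
      (geodesicImage γ₂ x₂ x₃ ∪ geodesicImage γ₃ x₃ x₄ ∪ geodesicImage γ₄ x₄ x₁) ∧
  geodesicImage γ₂ x₂ x₃ ⊆ Metric.cthickening μ
      (geodesicImage γ₁ x₁ x₂ ∪ geodesicImage γ₃ x₃ x₄ ∪ geodesicImage γ₄ x₄ x₁) ∧
  geodesicImage γ₃ x₃ x₄ ⊆ Metric.cthickening μ
      (geodesicImage γ₁ x₁ x₂ ∪ geodesicImage γ₂ x₂ x₃ ∪ geodesicImage γ₄ x₄ x₁) ∧
  geodesicImage γ₄ x₄ x₁ ⊆ Metric.cthickening μ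
      (geodesicImage γ₁ x₁ x₂ ∪ geodesicImage γ₂ x₂ x₃ ∪ geodesicImage γ₃ x₃ x₄)

/-- The image of `S` under the nearest-point projection to `Z` (as a set of nearest
points). -/
def projSet {M : Type*} [MetricSpace M] (Z S : Set M) : Set M :=
  {p : M | p ∈ Z ∧ ∃ x ∈ S, dist x p = Metric.infDist x Z}

/-!
In a convex space the two points of a leg fiber move apart as they approach the centre of the
tripod, so every fiber is at most as large as the central one, and a triangle is `C`-thin as
soon as its insize is at most `C`.

To bound the insize, look at the two legs meeting the internal point `p` of side `i`. If the gap
of such a leg at the centre exceeds `ν`, the intermediate value theorem gives a fiber of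
diameter exactly `ν` on it, which lies in the `ν`-fat part of side `i`; since the gap grows at
speed at most `2`, the central gap exceeds `ν` by at most twice the distance from that fat point
to `p`. The two fat points lie on opposite sides of `p` on side `i`, so these two distances add
up to at most `L`, and the third central distance follows from the triangle inequality.
-/

section

open Set Metric

namespace IsGeodesicSegment

variable {M : Type*} [MetricSpace M] {γ γ₁ γ₂ : ℝ → M} {a b p q₁ q₂ : M}

lemma dist_left (h : IsGeodesicSegment γ a b) {t : ℝ} (ht : t ∈ Icc 0 (dist a b)) :
    dist a (γ t) = t := by
  rw [← h.1, h.2.2 0 ⟨le_rfl, dist_nonneg⟩ t ht, zero_sub, abs_neg, abs_of_nonneg ht.1]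

lemma restrict (h : IsGeodesicSegment γ a b) {t : ℝ} (ht : t ∈ Icc 0 (dist a b)) :
    IsGeodesicSegment γ a (γ t) := by
  rw [IsGeodesicSegment, h.dist_left ht]
  exact ⟨h.1, rfl, fun s hs u hu ↦
    h.2.2 s ⟨hs.1, hs.2.trans ht.2⟩ u ⟨hu.1, hu.2.trans ht.2⟩⟩

lemma reverse (h : IsGeodesicSegment γ a b) :
    IsGeodesicSegment (fun t ↦ γ (dist a b - t)) b a := by
  rw [IsGeodesicSegment, dist_comm b a]
  refine ⟨by simpa using h.2.1, by simpa using h.1, fun s hs t ht ↦ ?_⟩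
  rw [h.2.2 _ ⟨by linarith [hs.2], by linarith [hs.1]⟩ _ ⟨by linarith [ht.2], by linarith [ht.1]⟩,
    sub_sub_sub_cancel_left, abs_sub_comm]

lemma continuousOn (h : IsGeodesicSegment γ a b) : ContinuousOn γ (Icc 0 (dist a b)) :=
  (LipschitzOnWith.of_dist_le_mul fun s hs t ht ↦ by
    rw [h.2.2 s hs t ht, NNReal.coe_one, one_mul, Real.dist_eq]).continuousOn

/-- Points at equal parameters on two geodesics drift apart at speed at most `2`. -/
lemma exists_dist_eq_of_le_dist (h₁ : IsGeodesicSegment γ₁ p q₁)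
    (h₂ : IsGeodesicSegment γ₂ p q₂) {T ν : ℝ} (hT : 0 ≤ T) (hT₁ : T ≤ dist p q₁)
    (hT₂ : T ≤ dist p q₂) (hν : 0 ≤ ν) (hνT : ν ≤ dist (γ₁ T) (γ₂ T)) :
    ∃ t ∈ Icc 0 T, dist (γ₁ t) (γ₂ t) = ν ∧ dist (γ₁ T) (γ₂ T) ≤ ν + 2 * (T - t) := by
  have hcont : ContinuousOn (fun t ↦ dist (γ₁ t) (γ₂ t)) (Icc 0 T) :=
    continuous_dist.comp_continuousOn ((h₁.continuousOn.mono (Icc_subset_Icc le_rfl hT₁)).prodMk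
      (h₂.continuousOn.mono (Icc_subset_Icc le_rfl hT₂)))
  have hstart : dist (γ₁ 0) (γ₂ 0) = 0 := by rw [h₁.1, h₂.1, dist_self]
  obtain ⟨t, ht, hνt⟩ := intermediate_value_Icc hT hcont (by rw [hstart]; exact ⟨hν, hνT⟩)
  refine ⟨t, ht, hνt, ?_⟩
  have e₁ := h₁.2.2 T ⟨hT, hT₁⟩ t ⟨ht.1, ht.2.trans hT₁⟩
  have e₂ := h₂.2.2 t ⟨ht.1, ht.2.trans hT₂⟩ T ⟨hT, hT₂⟩
  rw [abs_of_nonneg (sub_nonneg.2 ht.2)] at e₁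
  rw [abs_sub_comm, abs_of_nonneg (sub_nonneg.2 ht.2)] at e₂
  linarith [dist_triangle4 (γ₁ T) (γ₁ t) (γ₂ t) (γ₂ T)]

end IsGeodesicSegment

variable {M : Type*} [MetricSpace M] in
lemma ConvexMetric.dist_le_dist_of_le (hconv : ConvexMetric M) {γ₁ γ₂ : ℝ → M} {p q₁ q₂ : M}
    (h₁ : IsGeodesicSegment γ₁ p q₁) (h₂ : IsGeodesicSegment γ₂ p q₂) {s t : ℝ}
    (hs : 0 ≤ s) (hst : s ≤ t) (ht₁ : t ≤ dist p q₁) (ht₂ : t ≤ dist p q₂) :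
    dist (γ₁ s) (γ₂ s) ≤ dist (γ₁ t) (γ₂ t) := by
  obtain rfl | ht := (hs.trans hst).eq_or_lt
  · rw [le_antisymm hst hs]
  have hc := hconv _ _ _ _ _ _ (h₁.restrict ⟨ht.le, ht₁⟩) (h₂.restrict ⟨ht.le, ht₂⟩)
  rw [h₁.dist_left ⟨ht.le, ht₁⟩, h₂.dist_left ⟨ht.le, ht₂⟩] at hc
  have hw : s / t ∈ Icc (0 : ℝ) 1 := ⟨by positivity, (div_le_one ht).2 hst⟩
  have key := hc.2 (x := 0) (y := 1) ⟨le_rfl, zero_le_one⟩ ⟨zero_le_one, le_rfl⟩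
    (sub_nonneg.2 hw.2) hw.1 (sub_add_cancel 1 _)
  simp only [smul_eq_mul, mul_zero, mul_one, zero_add, zero_mul, one_mul, div_mul_cancel₀ s ht.ne',
    h₁.1, h₂.1, dist_self] at key
  exact key.trans (mul_le_of_le_one_left dist_nonneg hw.2)

lemma Fin.three_add_one_add_one (j : Fin 3) : j + 1 + 1 = j + 2 := by revert j; decide
lemma Fin.three_add_one_add_two (j : Fin 3) : j + 1 + 2 = j := by revert j; decide
lemma Fin.three_add_two_add_one (j : Fin 3) : j + 2 + 1 = j := by revert j; decide

namespace GeodesicTriangle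

variable {M : Type*} [MetricSpace M] (Δ : GeodesicTriangle M)

lemma gp_add_gp (j : Fin 3) : Δ.gp j + Δ.gp (j + 1) = dist (Δ.v j) (Δ.v (j + 1)) := by
  simp only [gp, gromovProd, Fin.three_add_one_add_one, Fin.three_add_one_add_two,
    dist_comm (Δ.v (j + 1)) (Δ.v j), dist_comm (Δ.v (j + 2)) (Δ.v j)]
  ring

lemma gp_nonneg (j : Fin 3) : 0 ≤ Δ.gp j := by
  have := dist_triangle (Δ.v (j + 1)) (Δ.v j) (Δ.v (j + 2))
  rw [dist_comm (Δ.v (j + 1)) (Δ.v j)] at this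
  simp only [gp, gromovProd]
  linarith

lemma gp_le_dist (j : Fin 3) : Δ.gp j ≤ dist (Δ.v j) (Δ.v (j + 1)) := by
  linarith [Δ.gp_add_gp j, Δ.gp_nonneg (j + 1)]

lemma dist_sub_gp (j : Fin 3) : dist (Δ.v (j + 2)) (Δ.v j) - Δ.gp j = Δ.gp (j + 2) := by
  linarith [Fin.three_add_two_add_one j ▸ Δ.gp_add_gp (j + 2)]

lemma isGeodesicSegment_side_reverse (j : Fin 3) :
    IsGeodesicSegment (fun t ↦ Δ.side (j + 2) (dist (Δ.v (j + 2)) (Δ.v j) - t))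
      (Δ.v j) (Δ.v (j + 2)) := by
  simpa only [Fin.three_add_two_add_one] using (Δ.isGeod (j + 2)).reverse

lemma gp_le_dist_add_two (j : Fin 3) : Δ.gp j ≤ dist (Δ.v j) (Δ.v (j + 2)) := by
  linarith [dist_comm (Δ.v j) (Δ.v (j + 2)), Δ.dist_sub_gp j, Δ.gp_nonneg (j + 2)]

lemma diam_legFiber (j : Fin 3) (t : ℝ) :
    diam (Δ.legFiber j t) =
      dist (Δ.side j t) (Δ.side (j + 2) (dist (Δ.v (j + 2)) (Δ.v j) - t)) :=
  diam_pair

lemma legFiber_gp (j : Fin 3) :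
    Δ.legFiber j (Δ.gp j) = {Δ.side j (Δ.gp j), Δ.side (j + 2) (Δ.gp (j + 2))} := by
  rw [legFiber, dist_sub_gp]

lemma diam_legFiber_gp (j : Fin 3) :
    diam (Δ.legFiber j (Δ.gp j)) =
      dist (Δ.side j (Δ.gp j)) (Δ.side (j + 2) (Δ.gp (j + 2))) := by
  rw [legFiber_gp, diam_pair]

lemma centralFiber_eq (i : Fin 3) :
    Δ.centralFiber =
      {Δ.side i (Δ.gp i), Δ.side (i + 1) (Δ.gp (i + 1)), Δ.side (i + 2) (Δ.gp (i + 2))} := by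
  ext x
  fin_cases i <;> simp [centralFiber] <;> tauto

lemma isBounded_centralFiber : Bornology.IsBounded Δ.centralFiber :=
  ((finite_singleton _).insert _ |>.insert _).isBounded

lemma legFiber_gp_subset_centralFiber (j : Fin 3) :
    Δ.legFiber j (Δ.gp j) ⊆ Δ.centralFiber := by
  rw [legFiber_gp, Δ.centralFiber_eq j]
  exact insert_subset_insert (singleton_subset_iff.2 (by simp))

lemma diam_legFiber_le_insize (hconv : ConvexMetric M) {j : Fin 3} {t : ℝ}
    (ht : t ∈ Icc 0 (Δ.gp j)) : diam (Δ.legFiber j t) ≤ Δ.insize := calc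
  diam (Δ.legFiber j t) ≤ diam (Δ.legFiber j (Δ.gp j)) := by
    simp only [diam_legFiber]
    exact hconv.dist_le_dist_of_le (Δ.isGeod j) (Δ.isGeodesicSegment_side_reverse j) ht.1 ht.2
      (Δ.gp_le_dist j) (Δ.gp_le_dist_add_two j)
  _ ≤ Δ.insize :=
    diam_mono (Δ.legFiber_gp_subset_centralFiber j) Δ.isBounded_centralFiber

lemma isThin_of_insize_le (hconv : ConvexMetric M) {C : ℝ} (h : Δ.insize ≤ C) : Δ.IsThin C := by
  rintro F (⟨j, t, ht₀, ht, rfl⟩ | rfl)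
  · exact (Δ.diam_legFiber_le_insize hconv ⟨ht₀, ht⟩).trans h
  · exact h

lemma exists_diam_legFiber_eq {ν : ℝ} (hν : 0 ≤ ν) {j : Fin 3}
    (h : ν ≤ diam (Δ.legFiber j (Δ.gp j))) :
    ∃ t ∈ Icc 0 (Δ.gp j), diam (Δ.legFiber j t) = ν ∧
      diam (Δ.legFiber j (Δ.gp j)) ≤ ν + 2 * (Δ.gp j - t) := by
  simp only [diam_legFiber] at h ⊢
  exact (Δ.isGeod j).exists_dist_eq_of_le_dist (Δ.isGeodesicSegment_side_reverse j)
    (Δ.gp_nonneg j) (Δ.gp_le_dist j) (Δ.gp_le_dist_add_two j) hν h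

variable {ν : ℝ} {i : Fin 3}

def fatParamsOfSide (ν : ℝ) (i : Fin 3) : Set ℝ :=
  {t | t ∈ Icc 0 (dist (Δ.v i) (Δ.v (i + 1))) ∧ ν ≤ diam (Δ.fiberOnSide i t)}

lemma sub_le_diam_fatPartOfSide {s t : ℝ} (hs : s ∈ Δ.fatParamsOfSide ν i)
    (ht : t ∈ Δ.fatParamsOfSide ν i) : t - s ≤ diam (Δ.fatPartOfSide ν i) := by
  have hbdd : Bornology.IsBounded (Δ.fatPartOfSide ν i) :=
    (isCompact_Icc.image_of_continuousOn (Δ.isGeod i).continuousOn).isBounded.subset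
      (image_mono fun _ hx ↦ hx.1)
  have := dist_le_diam_of_mem hbdd ⟨s, hs, rfl⟩ ⟨t, ht, rfl⟩
  rw [(Δ.isGeod i).2.2 s hs.1 t ht.1, abs_sub_comm] at this
  exact (le_abs_self _).trans this

lemma fiberOnSide_gp : Δ.fiberOnSide i (Δ.gp i) = Δ.centralFiber := by
  simp [fiberOnSide]

lemma gp_mem_fatParamsOfSide (h : ν ≤ Δ.insize) : Δ.gp i ∈ Δ.fatParamsOfSide ν i :=
  ⟨⟨Δ.gp_nonneg i, Δ.gp_le_dist i⟩, Δ.fiberOnSide_gp ▸ h⟩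

lemma mem_fatParamsOfSide_of_le_diam_legFiber {t : ℝ} (ht : t ∈ Icc 0 (Δ.gp i))
    (h : ν ≤ diam (Δ.legFiber i t)) : t ∈ Δ.fatParamsOfSide ν i := by
  refine ⟨⟨ht.1, ht.2.trans (Δ.gp_le_dist i)⟩, ?_⟩
  obtain hlt | rfl := ht.2.lt_or_eq
  · rwa [fiberOnSide, if_pos hlt]
  · rw [fiberOnSide_gp]
    exact h.trans (diam_mono (Δ.legFiber_gp_subset_centralFiber i)
      Δ.isBounded_centralFiber)

lemma sub_mem_fatParamsOfSide_of_le_diam_legFiber {s : ℝ}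
    (hs : s ∈ Icc 0 (Δ.gp (i + 1))) (h : ν ≤ diam (Δ.legFiber (i + 1) s)) :
    dist (Δ.v i) (Δ.v (i + 1)) - s ∈ Δ.fatParamsOfSide ν i := by
  have hgp := Δ.gp_add_gp i
  refine ⟨⟨by linarith [hs.2, Δ.gp_nonneg i], by linarith [hs.1]⟩, ?_⟩
  obtain hlt | rfl := hs.2.lt_or_eq
  · rwa [fiberOnSide, if_neg (by linarith), if_pos (by linarith), sub_sub_cancel]
  · rw [← hgp, add_sub_cancel_right, fiberOnSide_gp]
    exact h.trans (diam_mono (Δ.legFiber_gp_subset_centralFiber (i + 1))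
      Δ.isBounded_centralFiber)

lemma exists_mem_fatParamsOfSide_le_gp (hν : 0 ≤ ν) (hc : ν ≤ Δ.insize) :
    ∃ a ∈ Δ.fatParamsOfSide ν i, a ≤ Δ.gp i ∧
      dist (Δ.side i (Δ.gp i)) (Δ.side (i + 2) (Δ.gp (i + 2))) ≤ ν + 2 * (Δ.gp i - a) := by
  rw [← diam_legFiber_gp]
  obtain hle | hlt := le_or_gt (diam (Δ.legFiber i (Δ.gp i))) ν
  · exact ⟨Δ.gp i, Δ.gp_mem_fatParamsOfSide hc, le_rfl, by linarith⟩
  obtain ⟨t, ht, hνt, hbound⟩ := Δ.exists_diam_legFiber_eq hν hlt.le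
  exact ⟨t, Δ.mem_fatParamsOfSide_of_le_diam_legFiber ht hνt.ge, ht.2, hbound⟩

lemma exists_mem_fatParamsOfSide_ge_gp (hν : 0 ≤ ν) (hc : ν ≤ Δ.insize) :
    ∃ b ∈ Δ.fatParamsOfSide ν i, Δ.gp i ≤ b ∧
      dist (Δ.side (i + 1) (Δ.gp (i + 1))) (Δ.side i (Δ.gp i)) ≤ ν + 2 * (b - Δ.gp i) := by
  have hgp := Δ.gp_add_gp i
  have hdiam := Δ.diam_legFiber_gp (i + 1)
  rw [Fin.three_add_one_add_two] at hdiam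
  rw [← hdiam]
  obtain hle | hlt := le_or_gt (diam (Δ.legFiber (i + 1) (Δ.gp (i + 1)))) ν
  · exact ⟨Δ.gp i, Δ.gp_mem_fatParamsOfSide hc, le_rfl, by linarith⟩
  obtain ⟨s, hs, hνs, hbound⟩ := Δ.exists_diam_legFiber_eq hν hlt.le
  exact ⟨_, Δ.sub_mem_fatParamsOfSide_of_le_diam_legFiber hs hνs.ge, by linarith [hs.2],
    by linarith⟩

lemma insize_le_of_diam_fatPartOfSide_le (hν : 0 ≤ ν) {L : ℝ}
    (hfat : diam (Δ.fatPartOfSide ν i) ≤ L) : Δ.insize ≤ 2 * (L + ν) := by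
  have hL : 0 ≤ L := diam_nonneg.trans hfat
  obtain hlt | hc := lt_or_ge Δ.insize ν
  · linarith
  obtain ⟨a, ha, hai, hA⟩ := Δ.exists_mem_fatParamsOfSide_le_gp hν hc
  obtain ⟨b, hb, hib, hB⟩ := Δ.exists_mem_fatParamsOfSide_ge_gp hν hc
  have hab := (Δ.sub_le_diam_fatPartOfSide ha hb).trans hfat
  have hC := dist_triangle (Δ.side (i + 1) (Δ.gp (i + 1))) (Δ.side i (Δ.gp i))
    (Δ.side (i + 2) (Δ.gp (i + 2)))
  rw [insize, Δ.centralFiber_eq i, diam_triple, dist_comm (Δ.side i _)]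
  exact max_le (max_le (by linarith) (by linarith)) (by linarith)

end GeodesicTriangle

end

theorem isThin_of_isThinRel_of_fatPart_small_general {M : Type*} [MetricSpace M]
    (hconv : ConvexMetric M)
    (Δ : GeodesicTriangle M) (ν L : ℝ) (hν : 0 < ν)
    (i : Fin 3)
    (hfat : Metric.diam (Δ.fatPartOfSide ν i) ≤ L) :
    Δ.IsThin (2 * (L + ν)) :=
  Δ.isThin_of_insize_le hconv (Δ.insize_le_of_diam_fatPartOfSide_le hν.le hfat)

/-- If a geodesic triangle in a convex geodesic metric space is ν-thin relative to a set
`Z` (where `ν > 0`), and the ν-fat part of some side has diameter at most `L`, then the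
triangle is `2(L+ν)`-thin. -/
theorem isThin_of_isThinRel_of_fatPart_small {M : Type*} [MetricSpace M]
    (hgeo : GeodesicSpace M) (hconv : ConvexMetric M)
    (Δ : GeodesicTriangle M) (ν L : ℝ) (hν : 0 < ν) (Z : Set M)
    (hrel : Δ.IsThinRel ν Z) (i : Fin 3)
    (hfat : Metric.diam (Δ.fatPartOfSide ν i) ≤ L) :
    Δ.IsThin (2 * (L + ν)) :=
  isThin_of_isThinRel_of_fatPart_small_general hconv Δ ν L hν i hfat
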